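/- arXiv:2206.10104 — 2 statements merged into one kernel-verified Lean document; each statement's English description precedes it below -/
import Mathlib

section
/- Let k be a number field of degree n_k ≥ 2 satisfying the ideal counting estimate ∑_{Nn ≤ Q} 1 = s_k Q + O(Q^{1-1/n_k}). Then with a = 1 - 1/n_k: ∑_{Nn ≤ Q} log(Q/Nn)·(Nn)^{-a} = s_k·n_k²·Q^{1/n_k} + O((log Q)²) for Q ≥ 2. -/
open scoped Classical NumberField

/-!
Group the ideals by norm: with `c m` the number of nonzero ideals of norm `m`, the sum is
`∑_{m ≤ Q} c m · w(m)` for the weight `w(t) = log (Q/t) · t^(b-1)`, `b = 1/n_k`, which vanishes at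
`t = Q`. Abel summation turns it into `-∫_1^Q w'(t) A(t) dt` with `A(t) = ∑_{m ≤ t} c m`.
Replacing `A(t)` by `s_k t` gives, by an explicit antiderivative, `s_k Q^b / b² + O(log Q)`.
The remainder `|A(t) - s_k t| ≤ C t^(1-b)` is integrated against
`|w'(t)| = (1 + (1-b) log (Q/t)) t^(b-2) ≤ (1 + log Q) t^(b-2)`, which gives
`C (1 + log Q) ∫_1^Q dt/t = O((log Q)²)`.
-/

open Finset MeasureTheory Real

section IdealsOfNorm

variable (K : Type*) [Field K] [NumberField K]

noncomputable def nonzeroIdealsOfNorm (m : ℕ) : Finset (Ideal (𝓞 K)) :=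
  (Ideal.finite_setOfPred_absNorm_eq (S := 𝓞 K) m).toFinset.filter (· ≠ 0)

variable {K}

lemma mem_nonzeroIdealsOfNorm {m : ℕ} {I : Ideal (𝓞 K)} :
    I ∈ nonzeroIdealsOfNorm K m ↔ Ideal.absNorm I = m ∧ I ≠ 0 := by
  simp [nonzeroIdealsOfNorm]

variable (K)

lemma nonzeroIdealsOfNorm_zero : nonzeroIdealsOfNorm K 0 = ∅ :=
  eq_empty_of_forall_notMem fun _ hI ↦
    let ⟨hnorm, hne⟩ := mem_nonzeroIdealsOfNorm.mp hI
    hne (Ideal.absNorm_eq_zero_iff.mp hnorm)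

lemma tsum_ite_absNorm_le_eq_sum (g : ℕ → ℝ) {Q : ℝ} (hQ : 0 ≤ Q) :
    (∑' I : Ideal (𝓞 K), if I ≠ 0 ∧ (Ideal.absNorm I : ℝ) ≤ Q then g (Ideal.absNorm I) else 0)
      = ∑ m ∈ Icc 0 ⌊Q⌋₊, (#(nonzeroIdealsOfNorm K m) : ℝ) * g m := by
  have hdisj : (↑(Icc 0 ⌊Q⌋₊) : Set ℕ).PairwiseDisjoint (nonzeroIdealsOfNorm K) :=
    fun m _ m' _ hmm' ↦ disjoint_left.mpr fun I hI hI' ↦ hmm' <| by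
      rw [← (mem_nonzeroIdealsOfNorm.mp hI).1, ← (mem_nonzeroIdealsOfNorm.mp hI').1]
  have hle {I : Ideal (𝓞 K)} : (Ideal.absNorm I : ℝ) ≤ Q ↔ Ideal.absNorm I ∈ Icc 0 ⌊Q⌋₊ := by
    rw [mem_Icc, Nat.le_floor_iff hQ]; simp
  rw [tsum_eq_sum (s := (Icc 0 ⌊Q⌋₊).biUnion (nonzeroIdealsOfNorm K)), sum_biUnion hdisj]
  · refine sum_congr rfl fun m hm ↦ ?_
    rw [← nsmul_eq_mul, ← sum_const]
    refine sum_congr rfl fun I hI ↦ ?_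
    obtain ⟨hnorm, hne⟩ := mem_nonzeroIdealsOfNorm.mp hI
    rw [if_pos ⟨hne, hle.mpr (hnorm ▸ hm)⟩, hnorm]
  · intro I hI
    refine if_neg fun ⟨hne, hIQ⟩ ↦ hI <| mem_biUnion.mpr ?_
    exact ⟨_, hle.mp hIQ, mem_nonzeroIdealsOfNorm.mpr ⟨rfl, hne⟩⟩

end IdealsOfNorm

noncomputable def logWeight (L b t : ℝ) : ℝ := (L - log t) * t ^ (b - 1)

noncomputable def logWeightDeriv (L b t : ℝ) : ℝ := -((1 + (1 - b) * (L - log t)) * t ^ (b - 2))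

section LogWeight

variable {L b t : ℝ}

lemma hasDerivAt_logWeight (ht : 0 < t) :
    HasDerivAt (logWeight L b) (logWeightDeriv L b t) t := by
  have h := ((hasDerivAt_log ht.ne').const_sub L).mul
    (hasDerivAt_rpow_const (p := b - 1) (Or.inl ht.ne'))
  refine h.congr_deriv ?_
  have : t ^ (b - 1) = t ^ (b - 2) * t := by rw [← rpow_add_one ht.ne']; ring_nf
  rw [logWeightDeriv, this, sub_sub, show (1 : ℝ) + 1 = 2 by norm_num]
  field_simp
  ring

lemma logWeight_self : logWeight (log t) b t = 0 := by simp [logWeight]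

lemma logWeight_log_eq {Q : ℝ} (hQ : Q ≠ 0) (ht : t ≠ 0) :
    logWeight (log Q) b t = log (Q / t) * t ^ (-(1 - b)) := by
  rw [logWeight, neg_sub, log_div hQ ht]

lemma continuousOn_logWeightDeriv : ContinuousOn (logWeightDeriv L b) (Set.Ioi 0) :=
  fun t ht ↦ ((continuousAt_const.add (continuousAt_const.mul (continuousAt_const.sub
    (continuousAt_log (ne_of_gt ht))))).mul
    (continuousAt_rpow_const t _ (Or.inl (ne_of_gt ht)))).neg.continuousWithinAt

lemma hasDerivAt_antideriv_logWeightDeriv_mul_id (hb : b ≠ 0) (ht : 0 < t) :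
    HasDerivAt (fun t ↦ -(((1 - b) / b * (L - log t) + 1 / b ^ 2) * t ^ b))
      (logWeightDeriv L b t * t) t := by
  have h := ((((hasDerivAt_log ht.ne').const_sub L).const_mul ((1 - b) / b)).add_const
    (1 / b ^ 2)).mul (hasDerivAt_rpow_const (p := b) (Or.inl ht.ne')) |>.neg
  refine h.congr_deriv ?_
  have h1 : t ^ b = t ^ (b - 1) * t := by rw [← rpow_add_one ht.ne']; ring_nf
  have h2 : t ^ (b - 2) * t = t ^ (b - 1) := by rw [← rpow_add_one ht.ne']; ring_nf
  rw [logWeightDeriv, neg_mul, mul_assoc _ (t ^ (b - 2)), h2, h1]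
  field_simp
  ring

lemma integral_logWeightDeriv_mul_id (hb : b ≠ 0) {Q : ℝ} (hQ : 1 ≤ Q) :
    ∫ t in Set.Ioc 1 Q, logWeightDeriv (log Q) b t * t
      = (1 - b) / b * log Q + 1 / b ^ 2 - Q ^ b / b ^ 2 := by
  have hpos : ∀ t ∈ Set.uIcc 1 Q, 0 < t := fun t ht ↦
    one_pos.trans_le (Set.uIcc_of_le hQ ▸ ht).1
  rw [← intervalIntegral.integral_of_le hQ, intervalIntegral.integral_eq_sub_of_hasDerivAt
    (fun t ht ↦ hasDerivAt_antideriv_logWeightDeriv_mul_id hb (hpos t ht))]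
  · simp only [log_one, one_rpow]
    ring
  · exact ((continuousOn_logWeightDeriv.mono fun t ht ↦ hpos t ht).mul
      continuousOn_id).intervalIntegrable

lemma abs_integral_logWeightDeriv_mul_le {E : ℝ → ℝ} {C Q : ℝ} (hb0 : 0 ≤ b) (hb1 : b ≤ 1)
    (hQ : 1 ≤ Q) (hE : ∀ t ∈ Set.Ioc 1 Q, |E t| ≤ C * t ^ (1 - b)) :
    |∫ t in Set.Ioc 1 Q, logWeightDeriv (log Q) b t * E t| ≤ |C| * (1 + log Q) * log Q := by
  have hbound : ∫ t in Set.Ioc 1 Q, |C| * (1 + log Q) * t⁻¹ = |C| * (1 + log Q) * log Q := by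
    rw [integral_const_mul, ← intervalIntegral.integral_of_le hQ,
      integral_inv_of_pos one_pos (one_pos.trans_le hQ), div_one]
  rw [← hbound, ← norm_eq_abs]
  refine norm_integral_le_of_norm_le ?_ ((ae_restrict_iff' measurableSet_Ioc).mpr
    (.of_forall fun t ht ↦ ?_))
  · refine (ContinuousOn.integrableOn_Icc ?_).mono_set Set.Ioc_subset_Icc_self
    exact continuousOn_const.mul (continuousOn_inv₀.mono fun t ht ↦ by
      simpa using (one_pos.trans_le ht.1).ne')
  have ht0 : 0 < t := one_pos.trans ht.1
  have hlog : 0 ≤ log Q - log t ∧ log Q - log t ≤ log Q :=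
    ⟨sub_nonneg.mpr (log_le_log ht0 ht.2), sub_le_self _ (log_nonneg ht.1.le)⟩
  have hfactor : 0 ≤ 1 + (1 - b) * (log Q - log t) ∧ 1 + (1 - b) * (log Q - log t) ≤ 1 + log Q :=
    ⟨by nlinarith, by nlinarith⟩
  have hpow : t ^ (b - 2) * t ^ (1 - b) = t⁻¹ := by
    rw [← rpow_add ht0, ← rpow_neg_one]; ring_nf
  have hE' : |E t| ≤ |C| * t ^ (1 - b) :=
    (hE t ht).trans (mul_le_mul_of_nonneg_right (le_abs_self C) (rpow_nonneg ht0.le _))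
  calc ‖logWeightDeriv (log Q) b t * E t‖
      = (1 + (1 - b) * (log Q - log t)) * t ^ (b - 2) * |E t| := by
        rw [norm_mul, norm_eq_abs, norm_eq_abs, logWeightDeriv, abs_neg,
          abs_of_nonneg (mul_nonneg hfactor.1 (rpow_nonneg ht0.le _))]
    _ ≤ (1 + log Q) * t ^ (b - 2) * (|C| * t ^ (1 - b)) :=
        mul_le_mul (mul_le_mul_of_nonneg_right hfactor.2 (rpow_nonneg ht0.le _)) hE'
          (abs_nonneg _) (mul_nonneg (by linarith [log_nonneg hQ]) (rpow_nonneg ht0.le _))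
    _ = |C| * (1 + log Q) * t⁻¹ := by rw [← hpow]; ring

end LogWeight

theorem abs_sum_mul_logWeight_sub_le {c : ℕ → ℝ} (hc0 : c 0 = 0) {b s C Q : ℝ} (hb0 : 0 < b)
    (hb1 : b ≤ 1) (hA : ∀ t : ℝ, 1 ≤ t → |∑ m ∈ Icc 0 ⌊t⌋₊, c m - s * t| ≤ C * t ^ (1 - b))
    (hQ : 1 ≤ Q) :
    |∑ m ∈ Icc 0 ⌊Q⌋₊, c m * logWeight (log Q) b m - s * Q ^ b / b ^ 2|
      ≤ |C| * (1 + log Q) * log Q + |s| * ((1 - b) / b * log Q + 1 / b ^ 2) := by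
  set A : ℝ → ℝ := fun t ↦ ∑ m ∈ Icc 0 ⌊t⌋₊, c m
  have hpos : ∀ t ∈ Set.Icc 1 Q, 0 < t := fun t ht ↦ one_pos.trans_le ht.1
  have hderiv : ∀ t ∈ Set.Icc 1 Q,
      HasDerivAt (logWeight (log Q) b) (logWeightDeriv (log Q) b t) t :=
    fun t ht ↦ hasDerivAt_logWeight (hpos t ht)
  have hcont : ContinuousOn (logWeightDeriv (log Q) b) (Set.Icc 1 Q) :=
    continuousOn_logWeightDeriv.mono hpos
  have habel : ∑ m ∈ Icc 0 ⌊Q⌋₊, c m * logWeight (log Q) b m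
      = -∫ t in Set.Ioc 1 Q, logWeightDeriv (log Q) b t * A t := by
    simp_rw [mul_comm (c _)]
    rw [sum_mul_eq_sub_integral_mul₀ c hc0 Q (fun t ht ↦ (hderiv t ht).differentiableAt)
      (hcont.integrableOn_Icc.congr_fun (fun t ht ↦ (hderiv t ht).deriv.symm) measurableSet_Icc),
      logWeight_self, zero_mul, zero_sub, setIntegral_congr_fun measurableSet_Ioc
      fun t ht ↦ by rw [(hderiv t (Set.Ioc_subset_Icc_self ht)).deriv]]
  have hsplit : ∫ t in Set.Ioc 1 Q, logWeightDeriv (log Q) b t * A t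
      = (∫ t in Set.Ioc 1 Q, logWeightDeriv (log Q) b t * (A t - s * t))
        + s * ∫ t in Set.Ioc 1 Q, logWeightDeriv (log Q) b t * t := by
    have hmain : IntegrableOn (fun t ↦ s * (logWeightDeriv (log Q) b t * t)) (Set.Ioc 1 Q) :=
      ((hcont.mul continuousOn_id).integrableOn_Icc.mono_set Set.Ioc_subset_Icc_self).const_mul s
    have hrest :
        IntegrableOn (fun t ↦ logWeightDeriv (log Q) b t * (A t - s * t)) (Set.Ioc 1 Q) :=
      ((integrableOn_mul_sum_Icc c (m := 0) zero_le_one hcont.integrableOn_Icc).mono_set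
        Set.Ioc_subset_Icc_self |>.sub hmain).congr_fun
        (fun t _ ↦ by simp only [Pi.sub_apply, A]; ring) measurableSet_Ioc
    rw [← integral_const_mul, ← integral_add hrest hmain]
    congr 1 with t
    ring
  have herr := abs_integral_logWeightDeriv_mul_le (E := fun t ↦ A t - s * t) hb0.le hb1 hQ
    fun t ht ↦ hA t ht.1.le
  have hM : 0 ≤ (1 - b) / b * log Q + 1 / b ^ 2 :=
    add_nonneg (mul_nonneg (div_nonneg (sub_nonneg.mpr hb1) hb0.le) (log_nonneg hQ)) (by positivity)
  rw [habel, hsplit, integral_logWeightDeriv_mul_id hb0.ne' hQ]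
  calc _ = |-(∫ t in Set.Ioc 1 Q, logWeightDeriv (log Q) b t * (A t - s * t))
          + -(s * ((1 - b) / b * log Q + 1 / b ^ 2))| := by congr 1; ring
    _ ≤ _ := by
      refine (abs_add_le _ _).trans (add_le_add (by rwa [abs_neg]) ?_)
      rw [abs_neg, abs_mul, abs_of_nonneg hM]

lemma add_mul_add_mul_sq_le {l x α β γ : ℝ} (hl : 0 < l) (hx : l ≤ x) (hα : 0 ≤ α) (hβ : 0 ≤ β) :
    α + β * x + γ * x ^ 2 ≤ (α / l ^ 2 + β / l + γ) * x ^ 2 := by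
  have hα' : α ≤ α / l ^ 2 * x ^ 2 := by
    rw [div_mul_eq_mul_div, le_div_iff₀ (by positivity)]
    exact mul_le_mul_of_nonneg_left (pow_le_pow_left₀ hl.le hx 2) hα
  have hβ' : β * x ≤ β / l * x ^ 2 := by
    rw [div_mul_eq_mul_div, le_div_iff₀ hl, sq, ← mul_assoc]
    exact mul_le_mul_of_nonneg_left hx (mul_nonneg hβ (hl.le.trans hx))
  nlinarith

theorem stmt10_general {k : Type*} [Field k] [NumberField k]
    (sk C : ℝ)
    (hcount : ∀ Q : ℝ, 1 ≤ Q →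
      |(∑' I : Ideal (𝓞 k), if I ≠ 0 ∧ (Ideal.absNorm I : ℝ) ≤ Q then (1 : ℝ) else 0)
          - sk * Q| ≤ C * Q ^ (1 - 1 / (Module.finrank ℚ k : ℝ))) :
    ∃ C' : ℝ, ∀ Q : ℝ, 2 ≤ Q →
      |(∑' I : Ideal (𝓞 k),
          if I ≠ 0 ∧ (Ideal.absNorm I : ℝ) ≤ Q then
            Real.log (Q / (Ideal.absNorm I : ℝ)) *
              (Ideal.absNorm I : ℝ) ^ (-(1 - 1 / (Module.finrank ℚ k : ℝ))) else 0)
        - sk * (Module.finrank ℚ k : ℝ) ^ 2 * Q ^ (1 / (Module.finrank ℚ k : ℝ))|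
          ≤ C' * (Real.log Q) ^ 2 := by
  set n : ℝ := (Module.finrank ℚ k : ℝ)
  have hn : 1 ≤ n := Nat.one_le_cast.mpr (Module.finrank_pos (R := ℚ) (M := k))
  set b := 1 / n
  have hb0 : 0 < b := by positivity
  have hb1 : b ≤ 1 := div_le_one_of_le₀ hn (by positivity)
  set c : ℕ → ℝ := fun m ↦ #(nonzeroIdealsOfNorm k m)
  have hc0 : c 0 = 0 := by simp [c, nonzeroIdealsOfNorm_zero]
  have hA (t : ℝ) (ht : 1 ≤ t) : |∑ m ∈ Icc 0 ⌊t⌋₊, c m - sk * t| ≤ C * t ^ (1 - b) := by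
    have h := tsum_ite_absNorm_le_eq_sum k (fun _ ↦ (1 : ℝ)) (zero_le_one.trans ht)
    simp only [mul_one] at h
    exact h ▸ hcount t ht
  refine ⟨(|sk| / b ^ 2) / log 2 ^ 2 + (|C| + |sk| * ((1 - b) / b)) / log 2 + |C|,
    fun Q hQ ↦ ?_⟩
  -- at `m = 0` the two weights differ (`log (Q / 0) = 0`), but `c 0 = 0`
  have hsum : ∀ m ∈ Icc 0 ⌊Q⌋₊, c m * (log (Q / m) * (m : ℝ) ^ (-(1 - b)))
      = c m * logWeight (log Q) b m := by
    rintro (_ | m) -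
    · simp [hc0]
    · rw [logWeight_log_eq (by linarith) (by positivity)]
  have h := tsum_ite_absNorm_le_eq_sum k (fun m ↦ log (Q / m) * (m : ℝ) ^ (-(1 - b)))
    (by linarith)
  beta_reduce at h
  rw [h, sum_congr rfl hsum,
    show sk * n ^ 2 * Q ^ b = sk * Q ^ b / b ^ 2 by simp only [b]; field_simp]
  calc _ ≤ _ := abs_sum_mul_logWeight_sub_le hc0 hb0 hb1 hA (by linarith)
    _ = |sk| / b ^ 2 + (|C| + |sk| * ((1 - b) / b)) * log Q + |C| * log Q ^ 2 := by ring
    _ ≤ _ := add_mul_add_mul_sq_le (log_pos one_lt_two) (log_le_log two_pos hQ) (by positivity)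
        (add_nonneg (abs_nonneg _) (mul_nonneg (abs_nonneg _)
          (div_nonneg (sub_nonneg.mpr hb1) hb0.le)))

/-- Assuming the ideal counting theorem, with `a = 1 - 1/n_k` one has
`∑_{N n ≤ Q} log(Q/N n) (N n)^{-a} = s_k n_k² Q^{1/n_k} + O((log Q)²)` for `Q ≥ 2`. -/
theorem stmt10 {k : Type*} [Field k] [NumberField k]
    (hdeg : 2 ≤ Module.finrank ℚ k) (sk C : ℝ) (hsk : 0 < sk)
    (hcount : ∀ Q : ℝ, 1 ≤ Q →
      |(∑' I : Ideal (𝓞 k), if I ≠ 0 ∧ (Ideal.absNorm I : ℝ) ≤ Q then (1 : ℝ) else 0)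
          - sk * Q| ≤ C * Q ^ (1 - 1 / (Module.finrank ℚ k : ℝ))) :
    ∃ C' : ℝ, ∀ Q : ℝ, 2 ≤ Q →
      |(∑' I : Ideal (𝓞 k),
          if I ≠ 0 ∧ (Ideal.absNorm I : ℝ) ≤ Q then
            Real.log (Q / (Ideal.absNorm I : ℝ)) *
              (Ideal.absNorm I : ℝ) ^ (-(1 - 1 / (Module.finrank ℚ k : ℝ))) else 0)
        - sk * (Module.finrank ℚ k : ℝ) ^ 2 * Q ^ (1 / (Module.finrank ℚ k : ℝ))|
          ≤ C' * (Real.log Q) ^ 2 :=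
  stmt10_general sk C hcount
end

section
/- Let k be a number field of degree n_k ≥ 3 satisfying the squarefree counting estimate ∑_{Nn ≤ Q} μ_k(n)² = (s_k/ζ_k(2))Q + O(Q^{1-1/n_k}). Then for any squarefree nonzero ideal r of O_k: ∑_{Nn ≤ Q, (n,r)=(1)} μ_k(n)² = (s_k/ζ_k(2))·(Nr/κ(r))·Q + O(Q^{1-1/n_k}·σ_{-1/(n_k+1)}(r)), where κ(r) = Nr·∏_{p|r}(1 + 1/Np), σ_a(r) = ∑_{d|r}(Nd)^a, and the implied constant is independent of r. -/
open scoped Classical NumberField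
open UniqueFactorizationMonoid

variable {k : Type*} [Field k] [NumberField k]

/-- `ζ_k(2) = ∑_{n ≠ 0} (N n)⁻²`, the Dedekind zeta value at `2`. -/
noncomputable def zetaK2 (k : Type*) [Field k] [NumberField k] : ℝ :=
  ∑' I : Ideal (𝓞 k), if I ≠ 0 then ((Ideal.absNorm I : ℝ) ^ 2)⁻¹ else 0

/-- `κ(r) = N r ∏_{p | r}(1 + 1/N p)`. -/
noncomputable def kappaK (I : Ideal (𝓞 k)) : ℝ :=
  (Ideal.absNorm I : ℝ) * ∏ p ∈ (factors I).toFinset, (1 + 1 / (Ideal.absNorm p : ℝ))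

/-- `σ_a(r) = ∑_{d | r} (N d)^a`. -/
noncomputable def sigmaK (a : ℝ) (n : Ideal (𝓞 k)) : ℝ :=
  ∑' d : Ideal (𝓞 k), if d ∣ n then (Ideal.absNorm d : ℝ) ^ a else 0

/-!
Write `N(r, Q)` for the number of squarefree ideals of norm at most `Q` coprime to `r`, and
`θ(r) = ∏_{p ∣ r} (1 + 1/N p)⁻¹ = N r / κ(r)`. For a prime `p ∤ r`, sorting the ideals counted
by `N(r, Q)` according to whether `p` divides them gives `N(r, Q) = N(p r, Q) + N(p r, Q / N p)`.
Iterating this in `Q` (the count vanishes for `Q < 1`) and adding one prime at a time, the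
hypothesis `|N((1), Q) - c Q| ≤ K Q^β` with `β = 1 - 1/n_k` propagates to
`|N(r, Q) - c θ(r) Q| ≤ K E_β(r) Q^β`, where `E_β(r) = ∏_{p ∣ r} (1 - N p^{-β})⁻¹`.
Since `γ = 1/(n_k + 1) < β`, each factor of `E_β(r)` is at most `1 + N p^{-γ}` once `N p` is
large, so `E_β(r) ≪ ∏_{p ∣ r} (1 + N p^{-γ}) ≤ σ_{-γ}(r)`.
-/

theorem Prime.squarefree_mul_iff {R : Type*} [CommMonoidWithZero R] [IsCancelMulZero R]
    [DecompositionMonoid R] {p m : R} (hp : Prime p) :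
    Squarefree (p * m) ↔ ¬p ∣ m ∧ Squarefree m := by
  rw [_root_.squarefree_mul_iff, hp.irreducible.isRelPrime_iff_not_dvd]
  exact ⟨fun ⟨h, _, hm⟩ => ⟨h, hm⟩, fun ⟨h, hm⟩ => ⟨h, hp.squarefree, hm⟩⟩

theorem UniqueFactorizationMonoid.primeFactors_prime_mul {M : Type*} [CommMonoidWithZero M]
    [NormalizationMonoid M] [UniqueFactorizationMonoid M] [Subsingleton Mˣ] {p a : M}
    (hp : Prime p) (ha : a ≠ 0) : primeFactors (p * a) = insert p (primeFactors a) := by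
  rw [primeFactors_mul_eq_union hp.ne_zero ha, primeFactors, normalizedFactors_irreducible
    hp.irreducible, Multiset.toFinset_singleton, associated_iff_eq.mp (normalize_associated p),
    Finset.insert_eq]

namespace Ideal

variable {R : Type*} [CommRing R]

theorem sup_mul_eq_top_iff {I a b : Ideal R} : I ⊔ a * b = ⊤ ↔ I ⊔ a = ⊤ ∧ I ⊔ b = ⊤ := by
  simp only [← isCoprime_iff_sup_eq, IsCoprime.mul_right_iff]

theorem IsMaximal.sup_eq_top_iff {p I : Ideal R} (hp : p.IsMaximal) : I ⊔ p = ⊤ ↔ ¬I ≤ p :=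
  ⟨fun h hle => hp.ne_top (by rwa [sup_eq_right.mpr hle] at h),
    fun h => hp.1.2 _ (lt_of_le_of_ne le_sup_right fun e => h (e ▸ le_sup_left))⟩

theorem sup_eq_top_iff_not_dvd_of_prime [IsDedekindDomain R] {p I : Ideal R} (hp : Prime p) :
    I ⊔ p = ⊤ ↔ ¬p ∣ I := by
  rw [dvd_iff_le, (((prime_iff_isPrime hp.ne_zero).mp hp).isMaximal hp.ne_zero).sup_eq_top_iff]

variable [IsDedekindDomain R] [Module.Free ℤ R] [Module.Finite ℤ R]

theorem absNorm_ne_zero_of_ne_zero {I : Ideal R} (hI : I ≠ 0) : absNorm I ≠ 0 :=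
  fun h => hI (absNorm_eq_zero_iff.mp h)

theorem two_le_absNorm_of_prime {p : Ideal R} (hp : Prime p) : (2 : ℝ) ≤ absNorm p := by
  have : 1 < absNorm p := Nat.one_lt_iff_ne_zero_and_ne_one.mpr
    ⟨absNorm_ne_zero_of_ne_zero hp.ne_zero,
      fun h => hp.not_isUnit (isUnit_iff.mpr (absNorm_eq_one_iff.mp h))⟩
  exact_mod_cast this

end Ideal

theorem UniqueFactorizationMonoid.prod_primeFactors_prime_mul {M N : Type*}
    [CommMonoidWithZero M] [NormalizationMonoid M] [UniqueFactorizationMonoid M] [Subsingleton Mˣ]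
    [CommMonoid N] (f : M → N) {p a : M} (hp : Prime p) (ha : a ≠ 0) (hpa : ¬p ∣ a) :
    ∏ q ∈ primeFactors (p * a), f q = f p * ∏ q ∈ primeFactors a, f q := by
  rw [primeFactors_prime_mul hp ha,
    Finset.prod_insert fun h => hpa (dvd_of_mem_normalizedFactors (mem_primeFactors.mp h))]

theorem UniqueFactorizationMonoid.primeFactors_prod_of_prime {M : Type*} [CommMonoidWithZero M]
    [NormalizationMonoid M] [UniqueFactorizationMonoid M] [Subsingleton Mˣ] {s : Finset M}
    (hs : ∀ p ∈ s, Prime p) : primeFactors (∏ p ∈ s, p) = s := by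
  rw [primeFactors, ← Finset.prod_map_val, Multiset.map_id',
    normalizedFactors_prod_of_prime hs, Finset.val_toFinset]

theorem UniqueFactorizationMonoid.prime_of_mem_primeFactors {M : Type*} [CommMonoidWithZero M]
    [NormalizationMonoid M] [UniqueFactorizationMonoid M] {p a : M} (hp : p ∈ primeFactors a) :
    Prime p :=
  prime_of_normalized_factor p (mem_primeFactors.mp hp)

theorem inv_one_sub_le_one_add {y z : ℝ} (hy : 0 ≤ y) (hyz : 2 * y ≤ z) (hz : z ≤ 1) :
    (1 - y)⁻¹ ≤ 1 + z := by
  rw [inv_eq_one_div, div_le_iff₀ (by linarith)]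
  nlinarith

theorem inv_one_sub_rpow_neg_le {x β γ : ℝ} (hx : 1 ≤ x) (hγ : 0 ≤ γ) (h2 : 2 ≤ x ^ (β - γ)) :
    (1 - x ^ (-β))⁻¹ ≤ 1 + x ^ (-γ) := by
  have hx0 : 0 < x := by linarith
  refine inv_one_sub_le_one_add (by positivity) ?_
    (Real.rpow_le_one_of_one_le_of_nonpos hx (by linarith))
  rw [show -γ = -β + (β - γ) by ring, Real.rpow_add hx0, mul_comm 2]
  exact mul_le_mul_of_nonneg_left h2 (by positivity)

theorem prod_one_add_rpow_le_sigmaK (a : ℝ) {r : Ideal (𝓞 k)} (hr : r ≠ 0) :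
    ∏ p ∈ primeFactors r, (1 + (Ideal.absNorm p : ℝ) ^ a) ≤ sigmaK a r := by
  set P := primeFactors r
  have hprime : ∀ t ∈ P.powerset, ∀ p ∈ t, Prime p := fun t ht p hp =>
    prime_of_mem_primeFactors (Finset.mem_powerset.mp ht hp)
  have hdvd : ∀ t ∈ P.powerset, ∏ p ∈ t, p ∣ r := fun t ht =>
    Finset.prod_primes_dvd r (hprime t ht) fun p hp =>
      dvd_of_mem_normalizedFactors (mem_primeFactors.mp (Finset.mem_powerset.mp ht hp))
  have hinj : Set.InjOn (fun t : Finset (Ideal (𝓞 k)) => ∏ p ∈ t, p) P.powerset := by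
    intro t ht t' ht' h
    rw [← primeFactors_prod_of_prime (hprime t (Finset.mem_coe.mp ht)),
      ← primeFactors_prod_of_prime (hprime t' (Finset.mem_coe.mp ht'))]
    exact congrArg primeFactors h
  have hsummable : Summable fun d : Ideal (𝓞 k) =>
      if d ∣ r then (Ideal.absNorm d : ℝ) ^ a else 0 := by
    refine summable_of_hasFiniteSupport
      ((Ideal.finite_setOfPred_absNorm_le (Ideal.absNorm r)).subset fun d hd => ?_)
    have hd : d ∣ r := by by_contra h; exact hd (if_neg h)
    exact Nat.le_of_dvd (Nat.pos_of_ne_zero (Ideal.absNorm_ne_zero_of_ne_zero hr))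
      (Ideal.absNorm_dvd_absNorm_of_le (Ideal.le_of_dvd hd))
  calc ∏ p ∈ P, (1 + (Ideal.absNorm p : ℝ) ^ a)
      = ∑ t ∈ P.powerset,
          if ∏ p ∈ t, p ∣ r then (Ideal.absNorm (∏ p ∈ t, p) : ℝ) ^ a else 0 := by
        rw [Finset.prod_one_add]
        refine Finset.sum_congr rfl fun t ht => ?_
        rw [if_pos (hdvd t ht), map_prod, Nat.cast_prod,
          Real.finsetProd_rpow _ _ fun _ _ => by positivity]
    _ = ∑ d ∈ P.powerset.image (fun t => ∏ p ∈ t, p),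
          if d ∣ r then (Ideal.absNorm d : ℝ) ^ a else 0 :=
        (Finset.sum_image (f := fun d => if d ∣ r then (Ideal.absNorm d : ℝ) ^ a else 0) hinj).symm
    _ ≤ sigmaK a r := hsummable.sum_le_tsum _ fun d _ => by split_ifs <;> positivity

namespace SqfreeCount

noncomputable def term (r : Ideal (𝓞 k)) (Q : ℝ) (I : Ideal (𝓞 k)) : ℝ :=
  if I ≠ 0 ∧ Squarefree I ∧ (Ideal.absNorm I : ℝ) ≤ Q ∧ I ⊔ r = ⊤ then 1 else 0

noncomputable def count (r : Ideal (𝓞 k)) (Q : ℝ) : ℝ := ∑' I, term r Q I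

variable {p a r : Ideal (𝓞 k)} {Q : ℝ}

theorem support_term_subset (r : Ideal (𝓞 k)) (Q : ℝ) :
    Function.support (term r Q) ⊆ {I | Ideal.absNorm I ≤ ⌊Q⌋₊} := by
  intro I hI
  by_cases h : I ≠ 0 ∧ Squarefree I ∧ (Ideal.absNorm I : ℝ) ≤ Q ∧ I ⊔ r = ⊤
  · exact Nat.le_floor h.2.2.1
  · exact absurd (if_neg h) hI

theorem summable_term (r : Ideal (𝓞 k)) (Q : ℝ) : Summable (term r Q) :=
  summable_of_hasFiniteSupport
    ((Ideal.finite_setOfPred_absNorm_le _).subset (support_term_subset r Q))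

theorem count_eq_zero_of_lt_one (hQ : Q < 1) : count r Q = 0 := by
  suffices ∀ I, term r Q I = 0 by simp [count, this]
  refine fun I => if_neg fun ⟨hI, _, hle, _⟩ => ?_
  have : 1 ≤ Ideal.absNorm I := Nat.one_le_iff_ne_zero.mpr (Ideal.absNorm_ne_zero_of_ne_zero hI)
  exact absurd (hle.trans_lt hQ) (by exact_mod_cast this.not_gt)

theorem count_top (Q : ℝ) : count (⊤ : Ideal (𝓞 k)) Q =
    ∑' I : Ideal (𝓞 k), if I ≠ 0 ∧ Squarefree I ∧ (Ideal.absNorm I : ℝ) ≤ Q then 1 else 0 := by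
  simp only [count, term, sup_top_eq, and_true]

theorem term_mul_of_dvd (hp : Prime p) {I : Ideal (𝓞 k)} (hI : p ∣ I) : term (p * r) Q I = 0 :=
  if_neg fun ⟨_, _, _, h⟩ =>
    (Ideal.sup_eq_top_iff_not_dvd_of_prime hp).mp (Ideal.sup_mul_eq_top_iff.mp h).1 hI

theorem term_mul_of_not_dvd (hp : Prime p) {I : Ideal (𝓞 k)} (hI : ¬p ∣ I) :
    term (p * r) Q I = term r Q I := by
  simp only [term, Ideal.sup_mul_eq_top_iff, Ideal.sup_eq_top_iff_not_dvd_of_prime hp, hI,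
    not_false_eq_true, true_and]

theorem term_prime_mul (hp : Prime p) (hpr : ¬p ∣ r) (m : Ideal (𝓞 k)) :
    term r Q (p * m) = term (p * r) (Q / Ideal.absNorm p) m := by
  have hNp : (0 : ℝ) < Ideal.absNorm p := by linarith [Ideal.two_le_absNorm_of_prime hp]
  simp only [term, mul_ne_zero_iff, ne_eq, hp.ne_zero, not_false_eq_true, true_and,
    hp.squarefree_mul_iff, map_mul, Nat.cast_mul, le_div_iff₀ hNp, sup_comm (p * m),
    Ideal.sup_mul_eq_top_iff, Ideal.sup_eq_top_iff_not_dvd_of_prime hp, hpr, sup_comm r m,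
    mul_comm (Ideal.absNorm m : ℝ)]
  exact if_congr (by tauto) rfl rfl

theorem count_eq_count_mul_add (hp : Prime p) (hpr : ¬p ∣ r) (Q : ℝ) :
    count r Q = count (p * r) Q + count (p * r) (Q / Ideal.absNorm p) := by
  set s := {I : Ideal (𝓞 k) | p ∣ I}
  have hsplit : ∀ I, term r Q I = term (p * r) Q I + s.indicator (term r Q) I := by
    intro I
    by_cases hI : p ∣ I
    · simp [s, hI, term_mul_of_dvd hp hI]
    · simp [s, hI, term_mul_of_not_dvd hp hI]
  have hsupp : Function.support (s.indicator (term r Q)) ⊆ Set.range (p * ·) := by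
    intro I hI
    obtain ⟨m, rfl⟩ : I ∈ s := Set.support_indicator_subset hI
    exact ⟨m, rfl⟩
  have hmultiples : ∑' I, s.indicator (term r Q) I = count (p * r) (Q / Ideal.absNorm p) := by
    rw [count, ← (mul_right_injective₀ hp.ne_zero).tsum_eq hsupp]
    exact tsum_congr fun m => by simp [s, term_prime_mul hp hpr]
  rw [count, tsum_congr hsplit, (summable_term _ _).tsum_add ((summable_term r Q).indicator s),
    hmultiples]
  rfl

noncomputable def density (r : Ideal (𝓞 k)) : ℝ :=
  ∏ p ∈ primeFactors r, (1 + 1 / (Ideal.absNorm p : ℝ))⁻¹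

noncomputable def errorFactor (β : ℝ) (r : Ideal (𝓞 k)) : ℝ :=
  ∏ p ∈ primeFactors r, (1 - (Ideal.absNorm p : ℝ) ^ (-β))⁻¹

theorem one_sub_rpow_neg_pos {β : ℝ} (hβ : 0 < β) (hp : Prime p) :
    0 < 1 - (Ideal.absNorm p : ℝ) ^ (-β) :=
  sub_pos.mpr <| Real.rpow_lt_one_of_one_lt_of_neg
    (by linarith [Ideal.two_le_absNorm_of_prime hp]) (neg_neg_of_pos hβ)

theorem density_eq_mul_density_prime_mul (hp : Prime p) (ha : a ≠ 0) (hpa : ¬p ∣ a) :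
    density a = (1 + 1 / (Ideal.absNorm p : ℝ)) * density (p * a) := by
  have : 0 < 1 + 1 / (Ideal.absNorm p : ℝ) := by
    have := Ideal.two_le_absNorm_of_prime hp; positivity
  rw [density, density, prod_primeFactors_prime_mul _ hp ha hpa, mul_inv_cancel_left₀ this.ne']

theorem errorFactor_eq_mul_errorFactor_prime_mul {β : ℝ} (hβ : 0 < β) (hp : Prime p)
    (ha : a ≠ 0) (hpa : ¬p ∣ a) :
    errorFactor β a = (1 - (Ideal.absNorm p : ℝ) ^ (-β)) * errorFactor β (p * a) := by
  rw [errorFactor, errorFactor, prod_primeFactors_prime_mul _ hp ha hpa,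
    mul_inv_cancel_left₀ (one_sub_rpow_neg_pos hβ hp).ne']

def HasErrorBound (c K β : ℝ) (r : Ideal (𝓞 k)) : Prop :=
  ∀ Q, 0 ≤ Q → |count r Q - c * density r * Q| ≤ K * errorFactor β r * Q ^ β

theorem hasErrorBound_top {c C β : ℝ} (hβ : β ≤ 1)
    (h : ∀ Q, 1 ≤ Q → |count (⊤ : Ideal (𝓞 k)) Q - c * Q| ≤ C * Q ^ β) :
    HasErrorBound c (|C| + |c|) β (⊤ : Ideal (𝓞 k)) := by
  intro Q hQ
  simp only [density, errorFactor, ← Ideal.one_eq_top, primeFactors_one, Finset.prod_empty,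
    mul_one]
  rw [Ideal.one_eq_top]
  rcases lt_or_ge Q 1 with hQ1 | hQ1
  · rw [count_eq_zero_of_lt_one hQ1, zero_sub, abs_neg, abs_mul, abs_of_nonneg hQ]
    nlinarith [abs_nonneg C, abs_nonneg c, Real.self_le_rpow_of_le_one hQ hQ1.le hβ,
      Real.rpow_nonneg hQ β]
  · nlinarith [h Q hQ1, le_abs_self C, abs_nonneg c, Real.rpow_nonneg hQ β]

variable {c K β : ℝ}

theorem HasErrorBound.prime_mul_of_lt_one (h : HasErrorBound c K β a) (hβ : 0 < β)
    (hp : Prime p) (ha : a ≠ 0) (hpa : ¬p ∣ a) {Q : ℝ} (hQ : 0 ≤ Q) (hQ1 : Q < 1) :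
    |count (p * a) Q - c * density (p * a) * Q| ≤ K * errorFactor β (p * a) * Q ^ β := by
  have hbound := h Q hQ
  rw [count_eq_zero_of_lt_one hQ1, density_eq_mul_density_prime_mul hp ha hpa,
    errorFactor_eq_mul_errorFactor_prime_mul hβ hp ha hpa] at hbound
  rw [count_eq_zero_of_lt_one hQ1, zero_sub, abs_neg]
  have hy := one_sub_rpow_neg_pos hβ hp
  have hx := Ideal.two_le_absNorm_of_prime hp
  set x : ℝ := (Ideal.absNorm p : ℝ)
  set u := c * density (p * a) * Q
  set v := K * errorFactor β (p * a) * Q ^ β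
  have hx' : 0 < 1 / x := by positivity
  rw [show c * ((1 + 1 / x) * density (p * a)) * Q = (1 + 1 / x) * u by ring,
    show K * ((1 - x ^ (-β)) * errorFactor β (p * a)) * Q ^ β = (1 - x ^ (-β)) * v by ring,
    zero_sub, abs_neg, abs_mul, abs_of_pos (by positivity : 0 < 1 + 1 / x)] at hbound
  have hv : 0 ≤ v :=
    nonneg_of_mul_nonneg_right ((mul_nonneg (by positivity) (abs_nonneg u)).trans hbound) hy
  have hy0 : 0 ≤ x ^ (-β) := by positivity
  nlinarith [abs_nonneg u]

theorem HasErrorBound.prime_mul_of_div (h : HasErrorBound c K β a) (hβ : 0 < β)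
    (hp : Prime p) (ha : a ≠ 0) (hpa : ¬p ∣ a) {Q : ℝ} (hQ : 0 ≤ Q)
    (hdiv : |count (p * a) (Q / Ideal.absNorm p) - c * density (p * a) * (Q / Ideal.absNorm p)|
      ≤ K * errorFactor β (p * a) * (Q / Ideal.absNorm p) ^ β) :
    |count (p * a) Q - c * density (p * a) * Q| ≤ K * errorFactor β (p * a) * Q ^ β := by
  have hbound := h Q hQ
  have hrec := count_eq_count_mul_add hp hpa Q
  rw [density_eq_mul_density_prime_mul hp ha hpa,
    errorFactor_eq_mul_errorFactor_prime_mul hβ hp ha hpa] at hbound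
  have hx := Ideal.two_le_absNorm_of_prime hp
  set x : ℝ := (Ideal.absNorm p : ℝ)
  rw [Real.div_rpow hQ (by positivity), div_eq_mul_inv _ (x ^ β), ← Real.rpow_neg (by positivity)]
    at hdiv
  calc |count (p * a) Q - c * density (p * a) * Q|
      = |(count a Q - c * ((1 + 1 / x) * density (p * a)) * Q)
          - (count (p * a) (Q / x) - c * density (p * a) * (Q / x))| := by
        rw [hrec]; congr 1; field_simp; ring
    _ ≤ |count a Q - c * ((1 + 1 / x) * density (p * a)) * Q|
          + |count (p * a) (Q / x) - c * density (p * a) * (Q / x)| := abs_sub _ _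
    _ ≤ K * ((1 - x ^ (-β)) * errorFactor β (p * a)) * Q ^ β
          + K * errorFactor β (p * a) * (Q ^ β * x ^ (-β)) := add_le_add hbound hdiv
    _ = K * errorFactor β (p * a) * Q ^ β := by ring

theorem HasErrorBound.prime_mul (h : HasErrorBound c K β a) (hβ : 0 < β)
    (hp : Prime p) (ha : a ≠ 0) (hpa : ¬p ∣ a) : HasErrorBound c K β (p * a) := by
  have hx := Ideal.two_le_absNorm_of_prime hp
  have hpow : ∀ n : ℕ, ∀ Q, 0 ≤ Q → Q < (Ideal.absNorm p : ℝ) ^ n →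
      |count (p * a) Q - c * density (p * a) * Q| ≤ K * errorFactor β (p * a) * Q ^ β := by
    intro n
    induction n with
    | zero => exact fun Q hQ hQ1 => h.prime_mul_of_lt_one hβ hp ha hpa hQ (by simpa using hQ1)
    | succ n ih =>
      refine fun Q hQ hQn => h.prime_mul_of_div hβ hp ha hpa hQ (ih _ (by positivity) ?_)
      rwa [div_lt_iff₀ (by positivity), ← pow_succ]
  intro Q hQ
  obtain ⟨n, hn⟩ := pow_unbounded_of_one_lt Q (by linarith : (1 : ℝ) < Ideal.absNorm p)
  exact hpow n Q hQ hn

theorem HasErrorBound.of_squarefree (htop : HasErrorBound c K β (⊤ : Ideal (𝓞 k)))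
    (hβ : 0 < β) {r : Ideal (𝓞 k)} (hr : r ≠ 0) (hsf : Squarefree r) : HasErrorBound c K β r := by
  induction r using induction_on_prime with
  | h₁ => exact absurd rfl hr
  | h₂ u hu => rwa [Ideal.isUnit_iff.mp hu]
  | h₃ a p ha hp ih =>
    obtain ⟨hpa, hsfa⟩ := hp.squarefree_mul_iff.mp hsf
    exact (ih ha hsfa).prime_mul hβ hp ha hpa

theorem exists_errorFactor_le {β γ : ℝ} (hγ : 0 < γ) (hγβ : γ < β) :
    ∃ M, 0 ≤ M ∧ ∀ r : Ideal (𝓞 k),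
      errorFactor β r ≤ M * ∏ p ∈ primeFactors r, (1 + (Ideal.absNorm p : ℝ) ^ (-γ)) := by
  set X : ℝ := 2 ^ (β - γ)⁻¹
  -- Primes of norm above `X` satisfy `N p ^ (β - γ) ≥ 2`; each of the finitely many others
  -- costs at most the factor `A`.
  set small := (Ideal.finite_setOfPred_absNorm_le (S := 𝓞 k) ⌊X⌋₊).toFinset
  set A : ℝ := (1 - (2 : ℝ) ^ (-β))⁻¹
  have h2β : 0 < 1 - (2 : ℝ) ^ (-β) :=
    sub_pos.mpr (Real.rpow_lt_one_of_one_lt_of_neg one_lt_two (by linarith))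
  have hA : 1 ≤ A := one_le_inv₀ h2β |>.mpr (by linarith [Real.rpow_nonneg zero_le_two (-β)])
  have hfactor : ∀ p : Ideal (𝓞 k), Prime p → (1 - (Ideal.absNorm p : ℝ) ^ (-β))⁻¹
      ≤ (if p ∈ small then A else 1) * (1 + (Ideal.absNorm p : ℝ) ^ (-γ)) := by
    intro p hp
    have hx := Ideal.two_le_absNorm_of_prime hp
    split_ifs with hs
    · have hβ0 := Real.rpow_le_rpow_of_nonpos two_pos hx (by linarith : -β ≤ 0)
      have hγ0 : 0 ≤ (Ideal.absNorm p : ℝ) ^ (-γ) := by positivity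
      calc (1 - (Ideal.absNorm p : ℝ) ^ (-β))⁻¹ ≤ A := inv_anti₀ h2β (by linarith)
        _ ≤ A * (1 + (Ideal.absNorm p : ℝ) ^ (-γ)) :=
            le_mul_of_one_le_right (by linarith) (by linarith)
    · have hXp : X < Ideal.absNorm p := by
        simpa [small, Nat.floor_lt (by positivity : (0 : ℝ) ≤ X)] using hs
      rw [one_mul]
      refine inv_one_sub_rpow_neg_le (by linarith) hγ.le ?_
      calc (2 : ℝ) = X ^ (β - γ) := (Real.rpow_inv_rpow zero_le_two (by linarith)).symm
        _ ≤ _ := Real.rpow_le_rpow (by positivity) hXp.le (by linarith)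
  refine ⟨A ^ small.card, by positivity, fun r => ?_⟩
  calc errorFactor β r
      ≤ ∏ p ∈ primeFactors r, (if p ∈ small then A else 1) * (1 + (Ideal.absNorm p : ℝ) ^ (-γ)) :=
        Finset.prod_le_prod (fun p hp => (inv_pos.mpr (one_sub_rpow_neg_pos (hγ.trans hγβ)
          (prime_of_mem_primeFactors hp))).le) fun p hp =>
            hfactor p (prime_of_mem_primeFactors hp)
    _ = A ^ (primeFactors r ∩ small).card *
          ∏ p ∈ primeFactors r, (1 + (Ideal.absNorm p : ℝ) ^ (-γ)) := by
        rw [Finset.prod_mul_distrib, Finset.prod_ite_mem, Finset.prod_const]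
    _ ≤ A ^ small.card * ∏ p ∈ primeFactors r, (1 + (Ideal.absNorm p : ℝ) ^ (-γ)) := by
        gcongr
        exact Finset.inter_subset_right

theorem absNorm_div_kappaK {r : Ideal (𝓞 k)} (hr : r ≠ 0) :
    (Ideal.absNorm r : ℝ) / kappaK r = density r := by
  have : (Ideal.absNorm r : ℝ) ≠ 0 := Nat.cast_ne_zero.mpr (Ideal.absNorm_ne_zero_of_ne_zero hr)
  rw [kappaK, factors_eq_normalizedFactors, toFinset_normalizedFactors, density,
    Finset.prod_inv_distrib, div_mul_eq_div_div, div_self this, one_div]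

end SqfreeCount

open SqfreeCount

theorem stmt15_general (hdeg : 3 ≤ Module.finrank ℚ k) (sk C : ℝ)
    (hsqcount : ∀ Q : ℝ, 1 ≤ Q →
      |(∑' I : Ideal (𝓞 k),
          if I ≠ 0 ∧ Squarefree I ∧ (Ideal.absNorm I : ℝ) ≤ Q then (1 : ℝ) else 0)
        - sk / zetaK2 k * Q| ≤ C * Q ^ (1 - 1 / (Module.finrank ℚ k : ℝ))) :
    ∃ C₁ : ℝ, ∀ r : Ideal (𝓞 k), r ≠ 0 → Squarefree r → ∀ Q : ℝ, 1 ≤ Q →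
      |(∑' I : Ideal (𝓞 k),
          if I ≠ 0 ∧ Squarefree I ∧ (Ideal.absNorm I : ℝ) ≤ Q ∧ I ⊔ r = ⊤ then (1 : ℝ)
          else 0)
        - sk / zetaK2 k * ((Ideal.absNorm r : ℝ) / kappaK r) * Q|
      ≤ C₁ * Q ^ (1 - 1 / (Module.finrank ℚ k : ℝ)) *
          sigmaK (-(1 / ((Module.finrank ℚ k : ℝ) + 1))) r := by
  set n : ℝ := (Module.finrank ℚ k : ℝ)
  have hn : (3 : ℝ) ≤ n := Nat.ofNat_le_cast.mpr hdeg
  set β := 1 - 1 / n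
  set γ := 1 / (n + 1)
  have hγ : 0 < γ := by positivity
  have hγβ : γ < β := by
    rw [lt_sub_iff_add_lt, div_add_div _ _ (by positivity) (by positivity),
      div_lt_one (by positivity)]
    nlinarith
  have hβ1 : β ≤ 1 := sub_le_self _ (by positivity)
  set c := sk / zetaK2 k
  have htop : HasErrorBound c (|C| + |c|) β (⊤ : Ideal (𝓞 k)) :=
    hasErrorBound_top hβ1 fun Q hQ => by rw [count_top]; exact hsqcount Q hQ
  obtain ⟨M, hM0, hM⟩ := exists_errorFactor_le (k := k) hγ hγβ
  refine ⟨(|C| + |c|) * M, fun r hr hsf Q hQ => ?_⟩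
  rw [absNorm_div_kappaK hr]
  calc |count r Q - c * density r * Q|
      ≤ (|C| + |c|) * errorFactor β r * Q ^ β :=
        htop.of_squarefree (hγ.trans hγβ) hr hsf Q (by linarith)
    _ ≤ (|C| + |c|) * (M * sigmaK (-γ) r) * Q ^ β := by
        gcongr
        exact (hM r).trans (mul_le_mul_of_nonneg_left (prod_one_add_rpow_le_sigmaK _ hr) hM0)
    _ = (|C| + |c|) * M * Q ^ β * sigmaK (-γ) r := by ring

/-- Given the squarefree counting estimate (degree `n_k ≥ 3`), for every squarefree
nonzero ideal `r`:
`∑_{N n ≤ Q, (n,r)=(1)} μ_k(n)² = (s_k/ζ_k(2)) (N r/κ(r)) Q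
  + O(Q^{1-1/n_k} σ_{-1/(n_k+1)}(r))`, uniformly in `r`. -/
theorem stmt15 (hdeg : 3 ≤ Module.finrank ℚ k) (sk C : ℝ) (hsk : 0 < sk)
    (hsqcount : ∀ Q : ℝ, 1 ≤ Q →
      |(∑' I : Ideal (𝓞 k),
          if I ≠ 0 ∧ Squarefree I ∧ (Ideal.absNorm I : ℝ) ≤ Q then (1 : ℝ) else 0)
        - sk / zetaK2 k * Q| ≤ C * Q ^ (1 - 1 / (Module.finrank ℚ k : ℝ))) :
    ∃ C₁ : ℝ, ∀ r : Ideal (𝓞 k), r ≠ 0 → Squarefree r → ∀ Q : ℝ, 1 ≤ Q →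
      |(∑' I : Ideal (𝓞 k),
          if I ≠ 0 ∧ Squarefree I ∧ (Ideal.absNorm I : ℝ) ≤ Q ∧ I ⊔ r = ⊤ then (1 : ℝ)
          else 0)
        - sk / zetaK2 k * ((Ideal.absNorm r : ℝ) / kappaK r) * Q|
      ≤ C₁ * Q ^ (1 - 1 / (Module.finrank ℚ k : ℝ)) *
          sigmaK (-(1 / ((Module.finrank ℚ k : ℝ) + 1))) r :=
  stmt15_general hdeg sk C hsqcount
end
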